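/- arXiv:1407.5396 — 4 statements merged into one kernel-verified Lean document; each statement's English description precedes it below -/
import Mathlib

section
/- For pseudo-elements (x, α) and (y, β), one has ↕(x, α) ⊆ ↕(y, β) if and only if x ⪯ y and for every b ∈ β, b ⊓ x ∈ ↓α. -/
def dc {S : Type*} [Preorder S] (L : Set S) : Set S := {s | ∃ a ∈ L, s ≤ a}

def pc {S : Type*} [Preorder S] (x : S) (α : Set S) : Set S := dc {x} \ dc α

section Preorder

variable {S : Type*} [Preorder S] {L : Set S} {s x y : S} {α β : Set S}

theorem isLowerSet_dc (L : Set S) : IsLowerSet (dc L) :=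
  fun _ _ hts ⟨a, ha, hta⟩ => ⟨a, ha, hts.trans hta⟩

theorem mem_dc_of_mem {a : S} (ha : a ∈ L) : a ∈ dc L := ⟨a, ha, le_rfl⟩

@[simp]
theorem mem_dc_singleton : s ∈ dc {x} ↔ s ≤ x := by
  simp [dc]

theorem mem_pc : s ∈ pc x α ↔ s ≤ x ∧ s ∉ dc α := by
  rw [pc, Set.mem_sdiff, mem_dc_singleton]

theorem le_of_pc_subset_pc (hx : x ∉ dc α) (h : pc x α ⊆ pc y β) : x ≤ y :=
  (mem_pc.1 (h (mem_pc.2 ⟨le_rfl, hx⟩))).1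

end Preorder

section SemilatticeInf

variable {S : Type*} [SemilatticeInf S] {x y b : S} {α β : Set S}

theorem inf_mem_dc_of_pc_subset_pc (h : pc x α ⊆ pc y β) (hb : b ∈ β) : b ⊓ x ∈ dc α := by
  by_contra hbx
  exact (mem_pc.1 (h (mem_pc.2 ⟨inf_le_right, hbx⟩))).2
    (isLowerSet_dc β inf_le_left (mem_dc_of_mem hb))

theorem pc_subset_pc_of_le (hxy : x ≤ y) (hβα : ∀ b ∈ β, b ⊓ x ∈ dc α) :
    pc x α ⊆ pc y β := by
  intro s hs
  obtain ⟨hsx, hsα⟩ := mem_pc.1 hs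
  refine mem_pc.2 ⟨hsx.trans hxy, fun ⟨b, hb, hsb⟩ => hsα ?_⟩
  exact isLowerSet_dc α (le_inf hsb hsx) (hβα b hb)

end SemilatticeInf

theorem stmt_6_general {S : Type*} [SemilatticeInf S] (x y : S) (α β : Set S)
    (hx : x ∉ dc α) :
    pc x α ⊆ pc y β ↔ x ≤ y ∧ ∀ b ∈ β, b ⊓ x ∈ dc α :=
  ⟨fun h => ⟨le_of_pc_subset_pc hx h, fun _ hb => inf_mem_dc_of_pc_subset_pc h hb⟩,
    fun ⟨hxy, hβα⟩ => pc_subset_pc_of_le hxy hβα⟩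

theorem stmt_6 {S : Type*} [SemilatticeInf S] (x y : S) (α β : Set S)
    (hα : IsAntichain (· ≤ ·) α) (hx : x ∉ dc α)
    (hβ : IsAntichain (· ≤ ·) β) (hy : y ∉ dc β) :
    pc x α ⊆ pc y β ↔ x ≤ y ∧ ∀ b ∈ β, b ⊓ x ∈ dc α :=
  stmt_6_general x y α β hx
end

section
/- If (x, α) and (y, β) are pseudo-elements in canonical form and ↕(x, α) = ↕(y, β), then x = y and α = β. -/
section PartialOrder

variable {S : Type*} [PartialOrder S] {x y : S} {α β : Set S}

lemma subset_dc (α : Set S) : α ⊆ dc α := fun a ha => ⟨a, ha, le_rfl⟩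

lemma mem_pc_iff {s : S} : s ∈ pc x α ↔ s ≤ x ∧ s ∉ dc α := by
  simp [pc, dc]

lemma le_of_pc_eq (hx : x ∉ dc α) (heq : pc x α = pc y β) : x ≤ y :=
  (mem_pc_iff.mp (heq ▸ mem_pc_iff.mpr ⟨le_rfl, hx⟩)).1

lemma subset_dc_of_pc_eq (hcanβ : ∀ b ∈ β, b ≤ x) (heq : pc x α = pc x β) :
    β ⊆ dc α := by
  intro b hb
  by_contra hbα
  have hb_pc : b ∈ pc x β := heq ▸ mem_pc_iff.mpr ⟨hcanβ b hb, hbα⟩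
  exact (mem_pc_iff.mp hb_pc).2 (subset_dc β hb)

lemma IsAntichain.subset_of_subset_dc (hα : IsAntichain (· ≤ ·) α)
    (hαβ : α ⊆ dc β) (hβα : β ⊆ dc α) : α ⊆ β := by
  intro a ha
  obtain ⟨b, hb, hab⟩ := hαβ ha
  obtain ⟨a', ha', hba'⟩ := hβα hb
  have ha'_eq : a = a' := hα.eq ha ha' (hab.trans hba')
  rwa [le_antisymm hab (ha'_eq ▸ hba')]

end PartialOrder

theorem stmt_7 {S : Type*} [SemilatticeInf S] (x y : S) (α β : Set S)
    (hα : IsAntichain (· ≤ ·) α) (hx : x ∉ dc α) (hcanα : ∀ a ∈ α, a ≤ x)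
    (hβ : IsAntichain (· ≤ ·) β) (hy : y ∉ dc β) (hcanβ : ∀ b ∈ β, b ≤ y)
    (heq : pc x α = pc y β) :
    x = y ∧ α = β := by
  obtain rfl : x = y := le_antisymm (le_of_pc_eq hx heq) (le_of_pc_eq hy heq.symm)
  have hβα : β ⊆ dc α := subset_dc_of_pc_eq hcanβ heq
  have hαβ : α ⊆ dc β := subset_dc_of_pc_eq hcanα heq.symm
  exact ⟨rfl, (hα.subset_of_subset_dc hαβ hβα).antisymm (hβ.subset_of_subset_dc hβα hαβ)⟩
end

section
/- For pseudo-elements (x, α) and (y, β), the set difference of their pseudo-closures satisfies ↕(x, α) \ ↕(y, β) = (↓{x} \ (↓{y} ∪ ↓α)) ∪ ⋃_{b ∈ β} (↓{x ⊓ b} \ ↓α). -/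
theorem dc_eq_biUnion_Iic {S : Type*} [Preorder S] (L : Set S) :
    dc L = ⋃ a ∈ L, Set.Iic a := by
  ext
  simp [dc]

theorem dc_singleton {S : Type*} [Preorder S] (x : S) : dc {x} = Set.Iic x := by
  simp [dc_eq_biUnion_Iic]

theorem stmt_10_general {S : Type*} [SemilatticeInf S] (x y : S) (α β : Set S) :
    pc x α \ pc y β =
      (dc {x} \ (dc {y} ∪ dc α)) ∪ ⋃ b ∈ β, (dc {x ⊓ b} \ dc α) := by
  simp only [pc, dc_singleton]
  rw [Set.sdiff_sdiff_right, Set.sdiff_sdiff, Set.union_comm (dc α), dc_eq_biUnion_Iic β,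
    Set.inter_iUnion₂]
  simp only [← Set.inter_sdiff_right_comm, Set.Iic_inter_Iic]

theorem stmt_10 {S : Type*} [SemilatticeInf S] (x y : S) (α β : Set S)
    (hα : IsAntichain (· ≤ ·) α) (hx : x ∉ dc α)
    (hβ : IsAntichain (· ≤ ·) β) (hy : y ∉ dc β) :
    pc x α \ pc y β =
      (dc {x} \ (dc {y} ∪ dc α)) ∪ ⋃ b ∈ β, (dc {x ⊓ b} \ dc α) :=
  stmt_10_general x y α β
end

section
/- For a pseudo-element (x, α) in a monotonic MDP, the predecessor of its pseudo-closure decomposes as Pre_{σ,τ}(↕(x, α)) = ⋃_{x' ∈ ⌈Pre_{σ,τ}(↓{x})⌉} ↕(x', ⌈Pre_{σ,τ}(↓α)⌉), where each (x', ⌈Pre_{σ,τ}(↓α)⌉) is understood via its pseudo-closure ↓{x'} \ ↓⌈Pre_{σ,τ}(↓α)⌉. -/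
def maxElems {S : Type*} [Preorder S] (L : Set S) : Set S :=
  {a ∈ L | ∀ b ∈ L, a ≤ b → b ≤ a}

def Pre {S A T : Type*} (E : S → A → Option (T → S)) (σ : A) (τ : T) (L : Set S) : Set S :=
  {s | ∃ f, E s σ = some f ∧ f τ ∈ L}

def IsCompatible {S A T : Type*} [Preorder S] (E : S → A → Option (T → S)) : Prop :=
  ∀ s s' : S, s ≤ s' → ∀ σ : A, ∀ f' : T → S, E s' σ = some f' →
    ∃ f : T → S, E s σ = some f ∧ ∀ τ : T, f τ ≤ f' τ

lemma Pre_diff {S A T : Type*} (E : S → A → Option (T → S)) (σ : A) (τ : T) (L M : Set S) :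
    Pre E σ τ (L \ M) = Pre E σ τ L \ Pre E σ τ M := by
  ext s
  constructor
  · rintro ⟨f, hf, hfL, hfM⟩
    refine ⟨⟨f, hf, hfL⟩, ?_⟩
    rintro ⟨g, hg, hgM⟩
    cases hf.symm.trans hg
    exact hfM hgM
  · rintro ⟨⟨f, hf, hfL⟩, hM⟩
    exact ⟨f, hf, hfL, fun hfM => hM ⟨f, hf, hfM⟩⟩

lemma dc_Pre_dc {S A T : Type*} [Preorder S] {E : S → A → Option (T → S)}
    (hE : IsCompatible E) (σ : A) (τ : T) (L : Set S) :
    dc (Pre E σ τ (dc L)) = Pre E σ τ (dc L) := by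
  ext s
  constructor
  · rintro ⟨s', ⟨f', hf', a, ha, hfa⟩, hss'⟩
    obtain ⟨f, hf, hff'⟩ := hE s s' hss' σ f' hf'
    exact ⟨f, hf, a, ha, (hff' τ).trans hfa⟩
  · exact fun hs => ⟨s, hs, le_rfl⟩

lemma dc_maxElems {S : Type*} [PartialOrder S] [Finite S] (L : Set S) :
    dc (maxElems L) = dc L := by
  ext s
  constructor
  · rintro ⟨a, ha, hsa⟩
    exact ⟨a, ha.1, hsa⟩
  · rintro ⟨a, ha, hsa⟩
    obtain ⟨b, hab, hb⟩ := Finite.exists_le_maximal (p := (· ∈ L)) ha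
    exact ⟨b, ⟨hb.1, fun c hc hbc => hb.2 hc hbc⟩, hsa.trans hab⟩

lemma biUnion_dc_singleton {S : Type*} [Preorder S] (L : Set S) :
    ⋃ a ∈ L, dc {a} = dc L := by
  ext s
  simp [dc]

theorem stmt_16_general {S A T : Type*} [SemilatticeInf S] [Fintype S]
    (E : S → A → Option (T → S))
    (hcompat : ∀ s s' : S, s ≤ s' → ∀ σ : A, ∀ f' : T → S, E s' σ = some f' →
      ∃ f : T → S, E s σ = some f ∧ ∀ τ : T, f τ ≤ f' τ)
    (x : S) (α : Set S)
    (σ : A) (τ : T) :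
    Pre E σ τ (pc x α) =
      ⋃ x' ∈ maxElems (Pre E σ τ (dc {x})),
        (dc {x'} \ dc (maxElems (Pre E σ τ (dc α)))) := by
  calc Pre E σ τ (pc x α)
      = Pre E σ τ (dc {x}) \ Pre E σ τ (dc α) := Pre_diff E σ τ _ _
    _ = dc (maxElems (Pre E σ τ (dc {x}))) \ dc (maxElems (Pre E σ τ (dc α))) := by
        rw [dc_maxElems, dc_maxElems, dc_Pre_dc hcompat, dc_Pre_dc hcompat]
    _ = _ := by
        rw [← biUnion_dc_singleton (maxElems _)]
        simp only [Set.iUnion_sdiff]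

theorem stmt_16 {S A T : Type*} [SemilatticeInf S] [Fintype S]
    (E : S → A → Option (T → S))
    (hcompat : ∀ s s' : S, s ≤ s' → ∀ σ : A, ∀ f' : T → S, E s' σ = some f' →
      ∃ f : T → S, E s σ = some f ∧ ∀ τ : T, f τ ≤ f' τ)
    (x : S) (α : Set S) (hα : IsAntichain (· ≤ ·) α) (hx : x ∉ dc α)
    (σ : A) (τ : T) :
    Pre E σ τ (pc x α) =
      ⋃ x' ∈ maxElems (Pre E σ τ (dc {x})),
        (dc {x'} \ dc (maxElems (Pre E σ τ (dc α)))) :=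
  stmt_16_general E hcompat x α σ τ
end
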